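/- If f : Z^r -> V is q-holonomic (satisfies, for each coordinate direction i, a nontrivial recurrence with coefficients Laurent polynomials in q and q^{n_1},...,q^{n_r}), and A in GL(r, Z), then the composite f ∘ A : Z^r -> V is q-holonomic in the same sense. -/

import Mathlib

/-! The directions `w ∈ ℤ^r` along which `f` satisfies a nontrivial recurrence, with coefficients in
the domain `ℤ[v^±1, u_1^±1, …, u_r^±1]` specialised at `v = q, u = q^n`, contain the unit vectors
and are closed under negation (read a recurrence backwards) and under nonnegative integer
combinations: if `f` has recurrences of orders `D_i` along `v_i`, then every shift
`f(n + Σ α_i v_i)` becomes, after multiplication by a nonzero coefficient, a combination of the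
finitely many shifts with `α_i < D_i`, so the shifts along any `Σ a_i v_i` with `a_i ≥ 0` satisfy a
linear relation as soon as there are more than `∏ D_i` of them. Hence `f` has a recurrence along
every column of `A`, and the monomial substitution `u ↦ u^A`, which is injective on exponents
because `A` is invertible, turns it into a recurrence of `f ∘ A` along the corresponding unit
vector. -/

noncomputable section

/-- Evaluation of a Laurent polynomial in the `r+1` variables `v, u_1, …, u_r` with integer
coefficients (encoded as a finitely supported function on exponent vectors) at
`v = q`, `u_i = q^{n_i}`; the result is the Laurent polynomial
`∑ a_e · q^{e_0 + ∑ e_i n_i}` in `ℤ[q,q⁻¹]`. -/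
def evalCoef (r : ℕ) (c : (Fin (r + 1) → ℤ) →₀ ℤ) (n : Fin r → ℤ) : LaurentPolynomial ℤ :=
  Finsupp.sum c fun e a =>
    a • (LaurentPolynomial.T (e 0 + ∑ i : Fin r, e i.succ * n i) : LaurentPolynomial ℤ)

/-- Working definition: `f : ℤ^r → V` is `q`-holonomic if for each coordinate direction `i`
it satisfies a nontrivial recurrence whose coefficients are Laurent polynomials in
`q, q^{n_1}, …, q^{n_r}`. -/
def IsQHoloMV (r : ℕ) {V : Type*} [AddCommGroup V] [Module (LaurentPolynomial ℤ) V]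
    (f : (Fin r → ℤ) → V) : Prop :=
  ∀ i : Fin r, ∃ d : ℕ, ∃ c : ℕ → ((Fin (r + 1) → ℤ) →₀ ℤ), c d ≠ 0 ∧
    ∀ n : Fin r → ℤ, ∑ j ∈ Finset.range (d + 1),
      evalCoef r (c j) n • f (fun k => n k + if k = i then (j : ℤ) else 0) = 0

open Finset Matrix Submodule

section Recurrence

variable (R : Type*) {M : Type*} [Semiring R] [AddCommMonoid M] [Module R M]

def HasRecurrence (x : ℕ → M) : Prop :=
  ∃ D : ℕ, ∃ c : ℕ → R, c D ≠ 0 ∧ ∑ m ∈ range (D + 1), c m • x m = 0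

variable {R}

theorem HasRecurrence.of_sum_eq_zero {x : ℕ → M} {N m₀ : ℕ} (c : ℕ → R) (hm₀ : m₀ < N)
    (hc : c m₀ ≠ 0) (h : ∑ m ∈ range N, c m • x m = 0) : HasRecurrence R x := by
  classical
  set D := Nat.findGreatest (fun m => c m ≠ 0) (N - 1)
  have hDN : D < N := by have := Nat.findGreatest_le (P := fun m => c m ≠ 0) (N - 1); omega
  refine ⟨D, c, Nat.findGreatest_spec (P := fun m => c m ≠ 0) (by omega) hc, ?_⟩
  rw [← h]
  refine sum_subset (range_subset_range.2 hDN) fun m hmN hmD => ?_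
  rw [mem_range] at hmN hmD
  rw [not_not.1 (Nat.findGreatest_is_greatest (P := fun m => c m ≠ 0) (n := N - 1) (by omega)
    (by omega)), zero_smul]

end Recurrence

section Saturation

variable {R M : Type*} [CommRing R] [IsDomain R] [AddCommGroup M] [Module R M]

def Submodule.saturation (N : Submodule R M) : Submodule R M where
  carrier := {x | ∃ s ≠ (0 : R), s • x ∈ N}
  add_mem' := by
    rintro x y ⟨s, hs, hx⟩ ⟨t, ht, hy⟩
    refine ⟨t * s, mul_ne_zero ht hs, ?_⟩
    rw [smul_add, mul_smul, mul_comm, mul_smul]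
    exact N.add_mem (N.smul_mem t hx) (N.smul_mem s hy)
  zero_mem' := ⟨1, one_ne_zero, by simp⟩
  smul_mem' c x := by
    rintro ⟨s, hs, hx⟩
    exact ⟨s, hs, by rw [smul_comm]; exact N.smul_mem c hx⟩

theorem Submodule.le_saturation (N : Submodule R M) : N ≤ N.saturation :=
  fun _ hx => ⟨1, one_ne_zero, by rwa [one_smul]⟩

theorem Submodule.mem_saturation_of_smul_mem {N : Submodule R M} {x : M} {s : R} (hs : s ≠ 0)
    (hx : s • x ∈ N.saturation) : x ∈ N.saturation := by
  obtain ⟨t, ht, htx⟩ := hx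
  exact ⟨t * s, mul_ne_zero ht hs, by rwa [mul_smul]⟩

theorem exists_ne_zero_sum_smul_eq_zero_of_mem_span {ι : Type*} [Fintype ι] (s : Finset M)
    (hcard : s.card < Fintype.card ι) (y : ι → M) (hy : ∀ i, y i ∈ span R (s : Set M)) :
    ∃ γ : ι → R, ∑ i, γ i • y i = 0 ∧ ∃ i, γ i ≠ 0 := by
  refine Fintype.not_linearIndependent_iff.1 fun hli => hcard.not_ge ?_
  simpa using linearIndependent_le_span' y hli s (Set.range_subset_iff.2 hy)

theorem HasRecurrence.of_forall_mem_saturation {s : Set M} (hs : s.Finite) {x : ℕ → M}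
    (hx : ∀ m, x m ∈ (span R s).saturation) : HasRecurrence R x := by
  lift s to Finset M using hs
  choose t ht htx using hx
  obtain ⟨γ, hγ, m₀, hm₀⟩ := exists_ne_zero_sum_smul_eq_zero_of_mem_span s
    (by simp) (fun m : Fin (s.card + 1) => t m • x m) (fun m => htx m)
  set γ' : ℕ → R := fun m => if h : m < s.card + 1 then γ ⟨m, h⟩ else 0
  refine .of_sum_eq_zero (fun m => γ' m * t m) m₀.isLt
    (by simp only [γ', dif_pos m₀.isLt, Fin.eta]; exact mul_ne_zero hm₀ (ht m₀)) ?_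
  rw [← hγ, ← Fin.sum_univ_eq_sum_range (fun m => (γ' m * t m) • x m)]
  simp only [γ', Fin.is_lt, dif_pos, Fin.eta, mul_smul]

theorem mem_saturation_span_box {ι : Type*} [Fintype ι] [DecidableEq ι] (p : (ι → ℕ) → M)
    (D : ι → ℕ) (hrec : ∀ i α, ∃ c : ℕ → R, c (D i) ≠ 0 ∧
      ∑ l ∈ range (D i + 1), c l • p (α + (Pi.single i l : ι → ℕ)) = 0) (α : ι → ℕ) :
    p α ∈ (span R (p '' Fintype.piFinset fun i => range (D i))).saturation := by
  induction hN : ∑ i, α i using Nat.strong_induction_on generalizing α with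
  | _ N ih =>
  by_cases hbox : ∀ i, α i < D i
  · exact le_saturation _ (subset_span (by simpa using ⟨α, hbox, rfl⟩))
  push Not at hbox
  obtain ⟨i, hi⟩ := hbox
  set α' := α - (Pi.single i (D i) : ι → ℕ)
  have hα : α' + Pi.single i (D i) = α := by
    funext j
    by_cases hj : j = i
    · subst hj
      simp only [Pi.add_apply, Pi.sub_apply, Pi.single_eq_same, α']
      omega
    · simp [α', hj]
  have hsum_single (l : ℕ) : ∑ j, (α' + (Pi.single i l : ι → ℕ)) j = ∑ j, α' j + l := by
    simp [sum_add_distrib]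
  -- the recurrence in direction `i`, based at `α'`, solves for `p α` in terms of lower shifts
  obtain ⟨c, hc, hrec⟩ := hrec i α'
  rw [sum_range_succ, hα, add_eq_zero_iff_eq_neg'] at hrec
  refine mem_saturation_of_smul_mem hc ?_
  rw [hrec]
  refine neg_mem (sum_mem fun l hl => smul_mem _ _ (ih _ ?_ _ rfl))
  have := hsum_single (D i)
  rw [hα] at this
  rw [mem_range] at hl
  rw [hsum_single]
  omega

end Saturation

namespace QHolonomic

variable {r : ℕ}

/-- `ℤ[v^±1, u_1^±1, …, u_r^±1]`, the exponent of `v` being coordinate `0`. -/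
abbrev Coeff (r : ℕ) := AddMonoidAlgebra ℤ (Fin (r + 1) → ℤ)

def expHom (n : Fin r → ℤ) : (Fin (r + 1) → ℤ) →+ ℤ :=
  AddMonoidHom.mk' (fun e => e 0 + Fin.tail e ⬝ᵥ n) fun e e' => by
    simp only [Pi.add_apply, show Fin.tail (e + e') = Fin.tail e + Fin.tail e' from rfl,
      add_dotProduct]
    ring

def evalAt (n : Fin r → ℤ) : Coeff r →+* LaurentPolynomial ℤ :=
  AddMonoidAlgebra.mapDomainRingHom ℤ (expHom n)

theorem evalCoef_eq_evalAt (c : (Fin (r + 1) → ℤ) →₀ ℤ) (n : Fin r → ℤ) :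
    evalCoef r c n = evalAt n (AddMonoidAlgebra.ofCoeff c) := by
  rw [evalAt, AddMonoidAlgebra.mapDomainRingHom_apply, AddMonoidAlgebra.mapDomain,
    Finsupp.mapDomain, AddMonoidAlgebra.ofCoeff_finsuppSum, evalCoef]
  refine Finsupp.sum_congr fun e _ => ?_
  rw [LaurentPolynomial.T, AddMonoidAlgebra.smul_single']
  simp [expHom, AddMonoidAlgebra.ofCoeff_single, Fin.tail, dotProduct]

/-- Exponent map of the monomial substitution dual to the affine map `n ↦ A n + u`
(see `expHom_comp_substExp`). -/
def substExp (A : Matrix (Fin r) (Fin r) ℤ) (u : Fin r → ℤ) :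
    (Fin (r + 1) → ℤ) →+ (Fin (r + 1) → ℤ) :=
  AddMonoidHom.mk' (fun e => Fin.cons (e 0 + Fin.tail e ⬝ᵥ u) (Fin.tail e ᵥ* A)) fun e e' => by
    have htail : Fin.tail (e + e') = Fin.tail e + Fin.tail e' := rfl
    refine funext fun j => Fin.cases ?_ (fun k => ?_) j
    · simp only [Fin.cons_zero, Pi.add_apply, htail, add_dotProduct]
      ring
    · simp only [Fin.cons_succ, Pi.add_apply, htail, add_vecMul]

theorem expHom_comp_substExp (A : Matrix (Fin r) (Fin r) ℤ) (u n : Fin r → ℤ) :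
    (expHom n).comp (substExp A u) = expHom (A *ᵥ n + u) := by
  ext e
  simp only [expHom, substExp, AddMonoidHom.coe_comp, AddMonoidHom.mk'_apply, Function.comp_apply,
    Fin.cons_zero, Fin.tail_cons, dotProduct_add, dotProduct_mulVec]
  ring

theorem substExp_injective {A : Matrix (Fin r) (Fin r) ℤ} (hA : IsUnit A) (u : Fin r → ℤ) :
    Function.Injective (substExp A u) := by
  intro e e' h
  simp only [substExp, AddMonoidHom.mk'_apply, Fin.cons_inj] at h
  have htail : Fin.tail e = Fin.tail e' := vecMul_injective_of_isUnit hA h.2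
  rw [htail, add_left_inj] at h
  rw [← Fin.cons_self_tail e, ← Fin.cons_self_tail e', h.1, htail]

def subst (A : Matrix (Fin r) (Fin r) ℤ) (u : Fin r → ℤ) : Coeff r →+* Coeff r :=
  AddMonoidAlgebra.mapDomainRingHom ℤ (substExp A u)

theorem evalAt_subst (A : Matrix (Fin r) (Fin r) ℤ) (u n : Fin r → ℤ) (c : Coeff r) :
    evalAt n (subst A u c) = evalAt (A *ᵥ n + u) c := by
  rw [evalAt, evalAt, ← expHom_comp_substExp, AddMonoidAlgebra.mapDomainRingHom_comp]
  rfl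

theorem subst_ne_zero {A : Matrix (Fin r) (Fin r) ℤ} (hA : IsUnit A) (u : Fin r → ℤ)
    {c : Coeff r} (hc : c ≠ 0) : subst A u c ≠ 0 :=
  (map_ne_zero_iff _ (AddMonoidAlgebra.mapDomain_injective (substExp_injective hA u))).2 hc

variable {V : Type*} [AddCommGroup V]

def shift (u : Fin r → ℤ) : ((Fin r → ℤ) → V) →+ ((Fin r → ℤ) → V) where
  toFun g n := g (n + u)
  map_zero' := rfl
  map_add' _ _ := rfl

theorem shift_apply (u : Fin r → ℤ) (g : (Fin r → ℤ) → V) (n : Fin r → ℤ) :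
    shift u g n = g (n + u) :=
  rfl

theorem shift_shift (u w : Fin r → ℤ) (g : (Fin r → ℤ) → V) :
    shift u (shift w g) = shift (u + w) g :=
  funext fun n => by simp only [shift_apply, add_assoc]

variable [Module (LaurentPolynomial ℤ) V]

abbrev evalModule : Module (Coeff r) ((Fin r → ℤ) → V) :=
  Module.compHom ((Fin r → ℤ) → V) (RingHom.pi evalAt)

attribute [local instance] evalModule

theorem smul_apply (c : Coeff r) (g : (Fin r → ℤ) → V) (n : Fin r → ℤ) :
    (c • g) n = evalAt n c • g n :=
  rfl

theorem shift_smul (u : Fin r → ℤ) (c : Coeff r) (g : (Fin r → ℤ) → V) :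
    shift u (c • g) = subst 1 u c • shift u g :=
  funext fun n => by simp only [shift_apply, smul_apply, evalAt_subst, one_mulVec]

def HasQRecurrence (f : (Fin r → ℤ) → V) (w : Fin r → ℤ) : Prop :=
  HasRecurrence (Coeff r) fun m : ℕ => shift (m • w) f

variable {f : (Fin r → ℤ) → V}

theorem isQHoloMV_iff : IsQHoloMV r f ↔ ∀ i, HasQRecurrence f (Pi.single i 1) := by
  refine forall_congr' fun i => ?_
  have hshift (n : Fin r → ℤ) (j : ℕ) :
      (fun k => n k + if k = i then (j : ℤ) else 0) = n + j • Pi.single i 1 := by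
    funext k
    by_cases hk : k = i <;> simp [hk]
  have hrec (d : ℕ) (c : ℕ → (Fin (r + 1) → ℤ) →₀ ℤ) :
      (∀ n : Fin r → ℤ, ∑ j ∈ range (d + 1),
        evalCoef r (c j) n • f (fun k => n k + if k = i then (j : ℤ) else 0) = 0) ↔
      ∑ j ∈ range (d + 1), AddMonoidAlgebra.ofCoeff (c j) •
        shift (j • Pi.single i 1) f = 0 := by
    rw [funext_iff]
    simp only [Finset.sum_apply, smul_apply, shift_apply, Pi.zero_apply, hshift,
      evalCoef_eq_evalAt]
  constructor
  · rintro ⟨d, c, hd, h⟩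
    exact ⟨d, fun j => .ofCoeff (c j), by simpa using hd, (hrec d c).1 h⟩
  · rintro ⟨d, c, hd, h⟩
    exact ⟨d, fun j => (c j).coeff, by simpa using hd, (hrec d _).2 h⟩

theorem HasQRecurrence.neg {w : Fin r → ℤ} (h : HasQRecurrence f w) : HasQRecurrence f (-w) := by
  obtain ⟨D, c, hc, hsum⟩ := h
  -- read the recurrence backwards from the base point `n - D • w`
  have hshifted := congrArg (shift (-(D • w))) hsum
  rw [map_sum, map_zero, ← sum_range_reflect] at hshifted
  refine .of_sum_eq_zero (fun m => subst 1 (-(D • w)) (c (D - m))) D.succ_pos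
    (subst_ne_zero isUnit_one _ hc) ?_
  rw [← hshifted]
  refine sum_congr rfl fun m hm => ?_
  rw [mem_range] at hm
  rw [shift_smul, shift_shift, add_tsub_cancel_right, sub_nsmul _ (by omega)]
  congr 3
  rw [smul_neg]
  abel

theorem HasQRecurrence.linearCombination {ι : Type*} [Fintype ι] [DecidableEq ι]
    {v : ι → Fin r → ℤ} (hv : ∀ i, HasQRecurrence f (v i)) (a : ι → ℕ) :
    HasQRecurrence f (Fintype.linearCombination ℕ v a) := by
  choose D c hc hsum using hv
  set L := Fintype.linearCombination ℕ v
  have hrec (i : ι) (α : ι → ℕ) : ∃ c' : ℕ → Coeff r, c' (D i) ≠ 0 ∧ ∑ l ∈ range (D i + 1),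
      c' l • shift (L (α + Pi.single i l)) f = 0 := by
    refine ⟨fun l => subst 1 (L α) (c i l), subst_ne_zero isUnit_one _ (hc i), ?_⟩
    have := congrArg (shift (L α)) (hsum i)
    rw [map_sum, map_zero] at this
    simpa only [shift_smul, shift_shift, map_add, L,
      Fintype.linearCombination_apply_single] using this
  have hbox := fun m : ℕ => mem_saturation_span_box (fun α => shift (L α) f) D hrec (m • a)
  simpa only [HasQRecurrence, map_smul] using HasRecurrence.of_forall_mem_saturation
    ((Fintype.piFinset fun i => range (D i)).finite_toSet.image _) hbox

theorem hasQRecurrence_of_isQHoloMV (hf : IsQHoloMV r f) (w : Fin r → ℤ) : HasQRecurrence f w := by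
  have hunit := isQHoloMV_iff.1 hf
  let v : Fin r ⊕ Fin r → Fin r → ℤ := Sum.elim (fun i => Pi.single i 1) (fun i => -Pi.single i 1)
  have hv : ∀ j, HasQRecurrence f (v j) := Sum.rec hunit fun i => (hunit i).neg
  convert HasQRecurrence.linearCombination hv
    (Sum.elim (fun i => (w i).toNat) (fun i => (-w i).toNat))
  funext k
  simp only [Fintype.linearCombination_apply, nsmul_eq_mul, Finset.sum_apply, Pi.mul_apply,
    Pi.natCast_apply, Fintype.sum_sum_type, Sum.elim_inl, Sum.elim_inr, Int.ofNat_toNat,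
    Pi.single_apply, mul_ite, mul_one, mul_zero, sum_ite_eq, mem_univ, if_true, Pi.neg_apply,
    mul_neg, sum_neg_distrib, v]
  omega

theorem HasQRecurrence.comp_mulVec {A : Matrix (Fin r) (Fin r) ℤ} (hA : IsUnit A) {w : Fin r → ℤ}
    (h : HasQRecurrence f (A *ᵥ w)) : HasQRecurrence (fun n => f (A *ᵥ n)) w := by
  obtain ⟨D, c, hc, hsum⟩ := h
  refine ⟨D, fun m => subst A 0 (c m), subst_ne_zero hA 0 hc, funext fun n => ?_⟩
  have := congrFun hsum (A *ᵥ n)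
  simpa only [Finset.sum_apply, smul_apply, shift_apply, Pi.zero_apply, evalAt_subst, add_zero,
    mulVec_add, mulVec_smul] using this

end QHolonomic

/-- Composition with an element of `GL(r, ℤ)` preserves `q`-holonomicity. -/
theorem isQHoloMV_comp_glZ (r : ℕ) {V : Type*} [AddCommGroup V]
    [Module (LaurentPolynomial ℤ) V] (f : (Fin r → ℤ) → V) (hf : IsQHoloMV r f)
    (A : Matrix (Fin r) (Fin r) ℤ) (hA : IsUnit A.det) :
    IsQHoloMV r (fun n => f (A.mulVec n)) :=
  QHolonomic.isQHoloMV_iff.2 fun _ => (QHolonomic.hasQRecurrence_of_isQHoloMV hf _).comp_mulVec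
    ((Matrix.isUnit_iff_isUnit_det A).2 hA)
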